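/- For every γ > 1/2 and every λ > 2 it holds that G_γ(λ) ≥ 2 B(γ − 1/2, 3/2) (λ − 2)^γ and G_γ(λ) ≥ B(γ − 1/2, 2) (λ − 2)^{γ + 1/2}. -/

import Mathlib

/-!
Since `E² − 4 ≥ 4 (E − 2)` everywhere and `E² − 4 ≥ (E − 2)²` for `E ≥ 2`, on `[2, λ]` the factor
`√(E² − 4)` dominates both `2 √(E − 2)` and `E − 2`. Replacing it by either minorant turns
`G_γ(λ)` into a Beta integral `∫₂^λ (E − 2)^{a − 1} (λ − E)^{γ − 3/2} dE = B(a, γ − 1/2) (λ − 2)^{a + γ − 3/2}`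
with `a = 3/2` resp. `a = 2`.
-/

/-- `G_γ(λ) = ∫₂^λ (E² − 4)^{1/2} (λ − E)^{γ − 3/2} dE`. -/
noncomputable def Ggamma (γ lam : ℝ) : ℝ :=
  ∫ E in (2 : ℝ)..lam, Real.sqrt (E ^ 2 - 4) * (lam - E) ^ (γ - 3 / 2)

/-- The Euler Beta function `B(x, y) = Γ(x)Γ(y)/Γ(x + y)`. -/
noncomputable def eulerBeta (x y : ℝ) : ℝ :=
  Real.Gamma x * Real.Gamma y / Real.Gamma (x + y)

open Set

lemma eulerBeta_comm (x y : ℝ) : eulerBeta x y = eulerBeta y x := by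
  rw [eulerBeta, eulerBeta, mul_comm, add_comm]

lemma integral_rpow_mul_sub_rpow {a b s : ℝ} (ha : 0 < a) (hb : 0 < b) (hs : 0 < s) :
    ∫ x in (0 : ℝ)..s, x ^ (a - 1) * (s - x) ^ (b - 1) = eulerBeta a b * s ^ (a + b - 1) := by
  apply Complex.ofReal_injective
  have hcpow : ∀ x ∈ uIcc 0 s, ((x ^ (a - 1) * (s - x) ^ (b - 1) : ℝ) : ℂ)
      = (x : ℂ) ^ ((a : ℂ) - 1) * ((s : ℂ) - x) ^ ((b : ℂ) - 1) := by
    intro x hx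
    rw [uIcc_of_le hs.le] at hx
    rw [Complex.ofReal_mul, Complex.ofReal_cpow hx.1, Complex.ofReal_cpow (sub_nonneg.2 hx.2)]
    push_cast
    rfl
  rw [← intervalIntegral.integral_ofReal, intervalIntegral.integral_congr hcpow,
    Complex.betaIntegral_scaled _ _ hs, Complex.betaIntegral_eq_Gamma_mul_div _ _ (by simpa)
    (by simpa), Complex.ofReal_mul, Complex.ofReal_cpow hs.le, eulerBeta]
  push_cast
  rw [← Complex.ofReal_add, Complex.Gamma_ofReal, Complex.Gamma_ofReal, Complex.Gamma_ofReal]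
  ring

lemma integral_sub_rpow_mul_sub_rpow {a b u v : ℝ} (ha : 0 < a) (hb : 0 < b) (huv : u < v) :
    ∫ x in u..v, (x - u) ^ (a - 1) * (v - x) ^ (b - 1) = eulerBeta a b * (v - u) ^ (a + b - 1) := by
  have hshift := intervalIntegral.integral_comp_sub_right
    (fun x => x ^ (a - 1) * (v - u - x) ^ (b - 1)) u (a := u) (b := v)
  simp only [sub_self] at hshift
  rw [← integral_rpow_mul_sub_rpow ha hb (sub_pos.2 huv), ← hshift]
  simp only [sub_sub_sub_cancel_right]

lemma two_mul_sqrt_sub_two_le_sqrt_sq_sub_four (E : ℝ) :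
    2 * √(E - 2) ≤ √(E ^ 2 - 4) :=
  calc 2 * √(E - 2) = √(4 * (E - 2)) := by
        rw [Real.sqrt_mul zero_le_four, show (4 : ℝ) = 2 ^ 2 by norm_num,
          Real.sqrt_sq zero_le_two]
    _ ≤ √(E ^ 2 - 4) := Real.sqrt_le_sqrt (by nlinarith [sq_nonneg (E - 2)])

lemma sub_two_le_sqrt_sq_sub_four {E : ℝ} (hE : 2 ≤ E) : E - 2 ≤ √(E ^ 2 - 4) :=
  (Real.le_sqrt (by linarith) (by nlinarith)).2 (by nlinarith)

lemma intervalIntegrable_mul_sub_rpow {f : ℝ → ℝ} {a b r : ℝ} (hr : -1 < r)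
    (hf : ContinuousOn f (uIcc a b)) :
    IntervalIntegrable (fun x => f x * (b - x) ^ r) MeasureTheory.volume a b := by
  have hrpow := (intervalIntegral.intervalIntegrable_rpow' (a := 0) (b := b - a) hr).comp_sub_left b
  simp only [sub_zero, sub_sub_cancel] at hrpow
  exact hrpow.symm.continuousOn_mul hf

lemma le_Ggamma_of_le {γ lam c a : ℝ} (hγ : 1 / 2 < γ) (hlam : 2 < lam) (ha : 1 ≤ a)
    (hle : ∀ E ∈ Icc 2 lam, c * (E - 2) ^ (a - 1) ≤ √(E ^ 2 - 4)) :
    c * eulerBeta (γ - 1 / 2) a * (lam - 2) ^ (γ + a - 3 / 2) ≤ Ggamma γ lam := by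
  have hcont : ContinuousOn (fun E : ℝ => c * (E - 2) ^ (a - 1)) (uIcc 2 lam) :=
    (continuous_const.mul ((Real.continuous_rpow_const (by linarith)).comp
      (continuous_sub_right 2))).continuousOn
  have hr : -1 < γ - 3 / 2 := by linarith
  calc c * eulerBeta (γ - 1 / 2) a * (lam - 2) ^ (γ + a - 3 / 2)
      = c * ∫ E in (2 : ℝ)..lam, (E - 2) ^ (a - 1) * (lam - E) ^ (γ - 3 / 2) := by
        rw [show γ - 3 / 2 = γ - 1 / 2 - 1 by ring,
          integral_sub_rpow_mul_sub_rpow (by linarith) (by linarith) hlam, eulerBeta_comm]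
        ring_nf
    _ = ∫ E in (2 : ℝ)..lam, c * (E - 2) ^ (a - 1) * (lam - E) ^ (γ - 3 / 2) := by
        simp only [← intervalIntegral.integral_const_mul, mul_assoc]
    _ ≤ Ggamma γ lam :=
        intervalIntegral.integral_mono_on hlam.le (intervalIntegrable_mul_sub_rpow hr hcont)
          (intervalIntegrable_mul_sub_rpow hr (by fun_prop)) fun E hE =>
          mul_le_mul_of_nonneg_right (hle E hE) (Real.rpow_nonneg (by linarith [hE.2]) _)

/-- For every `γ > 1/2` and `λ > 2`,
`G_γ(λ) ≥ 2 B(γ − 1/2, 3/2) (λ − 2)^γ` and `G_γ(λ) ≥ B(γ − 1/2, 2) (λ − 2)^{γ + 1/2}`. -/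
theorem Ggamma_lower_bounds (γ lam : ℝ) (hγ : 1 / 2 < γ) (hlam : 2 < lam) :
    2 * eulerBeta (γ - 1 / 2) (3 / 2) * (lam - 2) ^ γ ≤ Ggamma γ lam
    ∧ eulerBeta (γ - 1 / 2) 2 * (lam - 2) ^ (γ + 1 / 2) ≤ Ggamma γ lam := by
  constructor
  · have h := le_Ggamma_of_le (c := 2) (a := 3 / 2) hγ hlam (by norm_num) fun E _ => by
      rw [show (3 / 2 - 1 : ℝ) = 1 / 2 by norm_num, ← Real.sqrt_eq_rpow]
      exact two_mul_sqrt_sub_two_le_sqrt_sq_sub_four E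
    rwa [show γ + 3 / 2 - 3 / 2 = γ by ring] at h
  · have h := le_Ggamma_of_le (c := 1) (a := 2) hγ hlam one_le_two fun E hE => by
      rw [one_mul, show (2 - 1 : ℝ) = 1 by norm_num, Real.rpow_one]
      exact sub_two_le_sqrt_sq_sub_four hE.1
    rwa [one_mul, show γ + 2 - 3 / 2 = γ + 1 / 2 by ring] at h
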